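/- Initiality: the term model F(T†) of a maximal consistent Henkin theory T† is an initial object in the category of models of T† with Σ*-homomorphisms: for every M ⊨ T†, there exists a unique homomorphism F(T†) → M. -/

import Mathlib

open FirstOrder FirstOrder.Language

variable {L : FirstOrder.Language}

/-- A theory is maximal consistent if it is consistent (has a model) and contains
`ψ` or `¬ψ` for every sentence `ψ`. -/
def IsMaximalConsistent (T : L.Theory) : Prop :=
  T.IsSatisfiable ∧ ∀ ψ : L.Sentence, ψ ∈ T ∨ ψ.not ∈ T

/-- Provable (semantic-consequence) equality of closed terms. -/
def termSetoid (T : L.Theory) : Setoid (L.Term Empty) where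
  r t s := T ⊨ᵇ (Term.equal t s : L.Sentence)
  iseqv := by
    constructor
    · intro t
      rw [Theory.models_sentence_iff]
      intro M
      simp [Sentence.Realize, Formula.Realize, Term.equal]
    · intro t s h
      rw [Theory.models_sentence_iff] at *
      intro M
      have := h M
      simp_all [Sentence.Realize, Formula.Realize, Term.equal]
    · intro t s u h1 h2
      rw [Theory.models_sentence_iff] at *
      intro M
      have := h1 M; have := h2 M
      simp_all [Sentence.Realize, Formula.Realize, Term.equal]

/-- The term model: closed terms modulo provable equality. -/
def TermModel (T : L.Theory) : Type _ := Quotient (termSetoid T)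

noncomputable instance (T : L.Theory) : L.Structure (TermModel T) where
  funMap f v := ⟦Term.func f fun i => (v i).out⟧
  RelMap R v := T ⊨ᵇ (R.formula fun i => (v i).out : L.Sentence)

/-- A theory is Henkin if every one–free-variable formula has a witness constant. -/
def IsHenkin (T : L.Theory) : Prop :=
  ∀ φ : L.BoundedFormula Empty 1, ∃ c : L.Constants,
    BoundedFormula.imp φ.exs
      (φ.toFormula.subst (Sum.elim Empty.elim fun _ => c.term)) ∈ T

section Aux

variable (T : L.Theory)

lemma termModel_equal_realize {t s : L.Term Empty} (h : T ⊨ᵇ (Term.equal t s : L.Sentence))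
    (M : Type*) [L.Structure M] [Nonempty M] [T.Model M] (v : Empty → M) :
    t.realize v = s.realize v := by
  have := h.realize_formula M (v := v)
  simpa [Formula.realize_equal] using this

/-- Evaluation of the term model into any model. -/
noncomputable def termEval (M : Type*) [L.Structure M] [Nonempty M] [T.Model M] :
    TermModel T → M :=
  Quotient.lift (fun t : L.Term Empty => t.realize (Empty.elim : Empty → M))
    (fun _ _ h => termModel_equal_realize T h M Empty.elim)

lemma termModel_mk_func (f : L.Functions n) (ts : Fin n → L.Term Empty) :
    (⟦Term.func f ts⟧ : TermModel T)
      = Structure.funMap (M := TermModel T) f (fun i => (⟦ts i⟧ : TermModel T)) := by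
  have e : Structure.funMap (M := TermModel T) f (fun i => (⟦ts i⟧ : TermModel T))
      = ⟦Term.func f fun i => (⟦ts i⟧ : TermModel T).out⟧ := rfl
  rw [e]
  apply Quotient.sound
  show T ⊨ᵇ (Term.equal (Term.func f ts)
    (Term.func f fun i => (⟦ts i⟧ : TermModel T).out) : L.Sentence)
  rw [Theory.models_sentence_iff]
  intro N
  simp only [Sentence.Realize, Formula.realize_equal, Term.realize_func]
  congr 1
  funext i
  exact (termModel_equal_realize T
    (Quotient.mk_out (s := termSetoid T) (ts i)) N _).symm

lemma hom_eq_termEval (M : Type*) [L.Structure M] [Nonempty M] [T.Model M]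
    (g : TermModel T →[L] M) (x : TermModel T) : g x = termEval T M x := by
  induction x using Quotient.ind with
  | _ t =>
    induction t with
    | var v => exact v.elim
    | func f ts ih =>
      conv_lhs => rw [termModel_mk_func T f ts]
      rw [g.map_fun f (fun i => (⟦ts i⟧ : TermModel T))]
      show _ = (Term.func f ts).realize Empty.elim
      rw [Term.realize_func]
      exact congrArg _ (funext fun i => ih i)

end Aux

/-- Initiality: the term model is initial in the category of models of the theory
with homomorphisms: there is a unique homomorphism to every model. -/
theorem term_model_initial {L : FirstOrder.Language} (T : L.Theory)
    (hmc : IsMaximalConsistent T) (hH : IsHenkin T)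
    (M : Type*) [L.Structure M] [Nonempty M] [T.Model M] :
    Nonempty (TermModel T →[L] M) ∧ Subsingleton (TermModel T →[L] M) := by
  constructor
  · refine ⟨⟨termEval T M, ?_, ?_⟩⟩
    · intro n f v
      show termEval T M (⟦Term.func f fun i => (v i).out⟧ : TermModel T) = _
      show (Term.func f fun i => (v i).out).realize Empty.elim = _
      rw [Term.realize_func]
      congr 1
      funext i
      show _ = termEval T M (v i)
      conv_rhs => rw [← Quotient.out_eq (v i)]
      rfl
    · intro n r v h
      have h' : T ⊨ᵇ (r.formula fun i => (v i).out : L.Sentence) := h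
      have := h'.realize_formula M (v := (Empty.elim : Empty → M))
      rw [Formula.realize_rel] at this
      have e : termEval T M ∘ v = fun i => ((v i).out).realize (Empty.elim : Empty → M) := by
        funext i
        show termEval T M (v i) = _
        conv_lhs => rw [← Quotient.out_eq (v i)]
        rfl
      show Structure.RelMap r (termEval T M ∘ v)
      rw [e]
      simpa using this
  · constructor
    intro g h
    ext x
    rw [hom_eq_termEval T M g x, hom_eq_termEval T M h x]
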